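/- Let p_n denote the n-th prime (p_1 = 2, p_2 = 3, ...). For all positive integers c and d, there exists a positive integer N such that p_{n-c} + p_n ≥ p_{n+d} for all integers n ≥ N with n > c. -/

import Mathlib

/-- The n-th prime, 1-indexed: `nthPrime 1 = 2`, `nthPrime 2 = 3`, ... -/
noncomputable def nthPrime (n : ℕ) : ℕ := Nat.nth Nat.Prime (n - 1)

/-!
Erdős's proof of Bertrand's postulate, made quantitative. In the prime factorisation of
`C(2n, n)`, the primes up to `2n/3` contribute at most `(2n)^√(2n) · 4^(2n/3)`, the primes in
`(2n/3, n]` do not occur, and each prime in `(n, 2n]` contributes at most `2n`. Since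
`4^n < n · C(2n, n)` and `(√(2n) + k) log(2n) = o(n)`, the interval `(n, 2n]` contains at least
`k` primes for all large `n`. Hence `p_{m+k} ≤ 2 p_m` eventually, and with `k = c + d` this gives
`p_{n+d} ≤ 2 p_{n-c} ≤ p_{n-c} + p_n`.
-/

open Nat Finset Filter Asymptotics
open scoped Nat.Prime

namespace Nat

theorem primesLE_union_filter_Ioc {a b : ℕ} (hab : a ≤ b) :
    primesLE a ∪ {p ∈ Ioc a b | p.Prime} = primesLE b := by
  ext p
  simp only [mem_union, mem_primesLE, mem_filter, mem_Ioc]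
  grind

theorem disjoint_primesLE_filter_Ioc (a b : ℕ) :
    Disjoint (primesLE a) {p ∈ Ioc a b | p.Prime} := by
  simp only [disjoint_left, mem_primesLE, mem_filter, mem_Ioc]
  omega

theorem primeCounting_add_card_filter_Ioc {a b : ℕ} (hab : a ≤ b) :
    π a + #{p ∈ Ioc a b | p.Prime} = π b := by
  rw [← primesLE_card_eq_primeCounting, ← primesLE_card_eq_primeCounting,
    ← card_union_of_disjoint (disjoint_primesLE_filter_Ioc a b), primesLE_union_filter_Ioc hab]

theorem primeCounting_nth_prime (m : ℕ) : π (nth Prime m) = m + 1 := by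
  rw [primeCounting_eq_primeCounting'_succ, primeCounting', count_succ, ← primeCounting',
    primeCounting'_nth_eq, if_pos (prime_nth_prime m)]

theorem nth_prime_strictMono : StrictMono (nth Prime) :=
  nth_strictMono infinite_setOfPred_prime

theorem centralBinom_eq_prod_primesLE (n : ℕ) :
    centralBinom n = ∏ p ∈ primesLE (2 * n), p ^ (centralBinom n).factorization p := by
  rw [primesLE_eq_filter_range, prod_filter_of_ne, prod_pow_factorization_centralBinom]
  intro p _ hp
  contrapose! hp
  rw [factorization_eq_zero_of_not_prime _ hp, pow_zero]

theorem prod_primesLE_pow_factorization_centralBinom_le {n : ℕ} (hn : 0 < n) :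
    ∏ p ∈ primesLE (2 * n / 3), p ^ (centralBinom n).factorization p
      ≤ (2 * n) ^ Nat.sqrt (2 * n) * 4 ^ (2 * n / 3) := by
  set s := Nat.sqrt (2 * n)
  have hle : ∀ p ∈ primesLE (2 * n / 3),
      p ^ (centralBinom n).factorization p ≤ if p ≤ s then 2 * n else p := by
    intro p hp
    split_ifs with hps
    · exact pow_factorization_choose_le (by omega)
    · have hv : (centralBinom n).factorization p ≤ 1 :=
        factorization_choose_le_one (sqrt_lt'.mp (not_le.mp hps))
      exact (pow_le_pow_right₀ ((one_lt_of_mem_primesLE hp).le) hv).trans_eq (pow_one p)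
  have hsmall : #{p ∈ primesLE (2 * n / 3) | p ≤ s} ≤ s := by
    refine (card_le_card fun p hp => ?_).trans (Nat.card_Ioc 0 s).le
    simp only [mem_filter, mem_primesLE, mem_Ioc] at hp ⊢
    exact ⟨hp.1.2.pos, hp.2⟩
  have hlarge : ∏ p ∈ primesLE (2 * n / 3) with ¬p ≤ s, p ≤ primorial (2 * n / 3) :=
    prod_le_prod_of_subset_of_one_le' (filter_subset _ _)
      fun p hp _ => (one_lt_of_mem_primesLE hp).le
  calc ∏ p ∈ primesLE (2 * n / 3), p ^ (centralBinom n).factorization p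
      ≤ ∏ p ∈ primesLE (2 * n / 3), if p ≤ s then 2 * n else p := prod_le_prod' hle
    _ = (2 * n) ^ #{p ∈ primesLE (2 * n / 3) | p ≤ s}
          * ∏ p ∈ primesLE (2 * n / 3) with ¬p ≤ s, p := by rw [prod_ite, prod_const]
    _ ≤ (2 * n) ^ s * 4 ^ (2 * n / 3) :=
      Nat.mul_le_mul (pow_le_pow_right₀ (by omega) hsmall)
        (hlarge.trans (primorial_le_four_pow _))

theorem prod_filter_Ioc_pow_factorization_centralBinom_le {n : ℕ} (hn : 2 < n) :
    ∏ p ∈ Ioc (2 * n / 3) (2 * n) with p.Prime, p ^ (centralBinom n).factorization p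
      ≤ (2 * n) ^ #{p ∈ Ioc n (2 * n) | p.Prime} := by
  rw [← prod_subset (s₁ := {p ∈ Ioc n (2 * n) | p.Prime})]
  · exact prod_le_pow_card _ _ _ fun p _ => pow_factorization_choose_le (by omega)
  · intro p
    simp only [mem_filter, mem_Ioc]
    exact fun ⟨⟨hnp, hp2n⟩, hp⟩ => ⟨⟨by omega, hp2n⟩, hp⟩
  · intro p hp hpn
    simp only [mem_filter, mem_Ioc] at hp hpn
    rw [factorization_centralBinom_of_two_mul_self_lt_three_mul hn
      (not_lt.mp fun h => hpn ⟨⟨h, hp.1.2⟩, hp.2⟩) (by omega), pow_zero]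

theorem centralBinom_le_pow_mul_four_pow {n : ℕ} (hn : 2 < n) :
    centralBinom n ≤ (2 * n) ^ (Nat.sqrt (2 * n) + #{p ∈ Ioc n (2 * n) | p.Prime})
      * 4 ^ (2 * n / 3) := by
  rw [centralBinom_eq_prod_primesLE, ← primesLE_union_filter_Ioc (Nat.div_le_self _ 3),
    prod_union (disjoint_primesLE_filter_Ioc _ _), pow_add, mul_right_comm]
  exact Nat.mul_le_mul (prod_primesLE_pow_factorization_centralBinom_le (by omega))
    (prod_filter_Ioc_pow_factorization_centralBinom_le hn)

end Nat

theorem isLittleO_sqrt_add_const_mul_log (k : ℝ) :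
    (fun x => (√x + k) * Real.log x) =o[atTop] id := by
  have hsqrt : (fun x => √x * Real.log x) =o[atTop] fun x => √x * √x := by
    refine (isBigO_refl _ _).mul_isLittleO ?_
    simpa only [← Real.sqrt_eq_rpow] using
      isLittleO_log_rpow_atTop (by norm_num : (0 : ℝ) < 1 / 2)
  have hsq : (fun x => √x * √x) =ᶠ[atTop] id :=
    (eventually_ge_atTop 0).mono fun x hx => Real.mul_self_sqrt hx
  simpa only [add_mul] using
    (hsqrt.trans_eventuallyEq hsq).add (Real.isLittleO_log_id_atTop.const_mul_left k)

theorem eventually_pow_mul_four_pow_le (k : ℕ) :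
    ∀ᶠ n : ℕ in atTop, (2 * n) ^ (Nat.sqrt (2 * n) + k) * 4 ^ (2 * n / 3) ≤ 4 ^ n := by
  have hlog4 : 0 < Real.log 4 := Real.log_pos (by norm_num)
  -- at `x = 2n` this bound reads `(√(2n) + k) log (2n) ≤ (n / 3) log 4`
  have hbound := (isLittleO_sqrt_add_const_mul_log k).bound
    (div_pos hlog4 (by norm_num : (0 : ℝ) < 6))
  have h2n : Tendsto (fun n : ℕ => ((2 * n : ℕ) : ℝ)) atTop atTop :=
    tendsto_natCast_atTop_atTop.comp (tendsto_id.const_mul_atTop' two_pos)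
  filter_upwards [h2n.eventually hbound, eventually_ge_atTop 1] with n hn hn1
  set s := Nat.sqrt (2 * n)
  have hlog : 0 ≤ Real.log (2 * n) := Real.log_nonneg (by norm_cast; omega)
  have hs : (s : ℝ) ≤ √(2 * n) := by exact_mod_cast Real.nat_sqrt_le_real_sqrt
  have hdiv : ((2 * n / 3 : ℕ) : ℝ) ≤ 2 * n / 3 := by exact_mod_cast Nat.cast_div_le
  push_cast at hn
  rw [id_eq, Real.norm_of_nonneg (mul_nonneg (by positivity) hlog),
    Real.norm_of_nonneg (by positivity)] at hn
  rw [← Nat.cast_le (α := ℝ), ← Real.log_le_log_iff (by positivity) (by positivity)]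
  push_cast
  rw [Real.log_mul (by positivity) (by positivity), Real.log_pow, Real.log_pow, Real.log_pow,
    Nat.cast_add]
  nlinarith [mul_le_mul_of_nonneg_right hs hlog]

theorem eventually_le_card_primes_Ioc_two_mul (k : ℕ) :
    ∀ᶠ n : ℕ in atTop, k ≤ #{p ∈ Ioc n (2 * n) | p.Prime} := by
  filter_upwards [eventually_pow_mul_four_pow_le k, eventually_ge_atTop 4] with n hpow hn
  by_contra! hfew
  set r := #{p ∈ Ioc n (2 * n) | p.Prime}
  refine lt_irrefl (4 ^ n) ?_
  calc 4 ^ n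
      < n * centralBinom n := four_pow_lt_mul_centralBinom n hn
    _ ≤ 2 * n * ((2 * n) ^ (Nat.sqrt (2 * n) + r) * 4 ^ (2 * n / 3)) :=
      Nat.mul_le_mul (by omega) (centralBinom_le_pow_mul_four_pow (by omega))
    _ = (2 * n) ^ (Nat.sqrt (2 * n) + r + 1) * 4 ^ (2 * n / 3) := by ring
    _ ≤ (2 * n) ^ (Nat.sqrt (2 * n) + k) * 4 ^ (2 * n / 3) :=
      Nat.mul_le_mul_right _ (pow_le_pow_right₀ (by omega) (by omega))
    _ ≤ 4 ^ n := hpow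

theorem eventually_nth_prime_add_le_two_mul (k : ℕ) :
    ∀ᶠ m : ℕ in atTop, nth Nat.Prime (m + k) ≤ 2 * nth Nat.Prime m := by
  filter_upwards [nth_prime_strictMono.tendsto_atTop.eventually
    (eventually_le_card_primes_Ioc_two_mul k)] with m hm
  have hcount :=
    primeCounting_add_card_filter_Ioc (Nat.le_mul_of_pos_left (nth Nat.Prime m) two_pos)
  rw [primeCounting_nth_prime] at hcount
  exact Nat.lt_succ_iff.mp
    (nth_lt_of_lt_count (by rw [← primeCounting', ← primeCounting]; omega))

theorem exists_N_cd_general (c d : ℕ) :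
    ∃ N : ℕ, 0 < N ∧ ∀ n : ℕ, N ≤ n → c < n →
      nthPrime (n - c) + nthPrime n ≥ nthPrime (n + d) := by
  obtain ⟨M, hM⟩ := eventually_atTop.mp (eventually_nth_prime_add_le_two_mul (c + d))
  refine ⟨M + c + 1, by omega, fun n hn _ => ?_⟩
  obtain ⟨m, rfl⟩ : ∃ m, n = m + c + 1 := ⟨n - c - 1, by omega⟩
  have hmono : nth Nat.Prime m ≤ nth Nat.Prime (m + c) :=
    nth_prime_strictMono.monotone (by omega)
  have hkey := hM m (by omega)
  simp only [nthPrime, Nat.add_sub_cancel, show m + c + 1 - c - 1 = m by omega,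
    show m + c + 1 + d - 1 = m + (c + d) by omega]
  omega

theorem exists_N_cd (c d : ℕ) (hc : 0 < c) (hd : 0 < d) :
    ∃ N : ℕ, 0 < N ∧ ∀ n : ℕ, N ≤ n → c < n →
      nthPrime (n - c) + nthPrime n ≥ nthPrime (n + d) :=
  exists_N_cd_general c d
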